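/- Let A be a k-linear Hopf category with object class X. Then the antipode is anti-multiplicative and unital: for all x, y, z ∈ X, all h ∈ A_{x,y} and l ∈ A_{y,z}, one has S_{x,z}(hl) = S_{y,z}(l) · S_{x,y}(h) in A_{z,x}, and S_{x,x}(1_x) = 1_x for all x ∈ X. -/
import Mathlib
open TensorProduct

section Conv
variable {k : Type*} [CommRing k] {X : Type*} {A : X → X → Type*}
  [∀ x y, AddCommGroup (A x y)] [∀ x y, Module k (A x y)]
  (mul : ∀ x y z, A x y →ₗ[k] A y z →ₗ[k] A x z)
  (one : ∀ x, A x x)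
  {M : Type*} [AddCommGroup M] [Module k M]
  (ΔM : M →ₗ[k] M ⊗[k] M) (εM : M →ₗ[k] k)

noncomputable def conv {a b c : X} (f : M →ₗ[k] A a b) (g : M →ₗ[k] A b c) :
    M →ₗ[k] A a c :=
  TensorProduct.lift (mul a b c) ∘ₗ TensorProduct.map f g ∘ₗ ΔM

noncomputable def eunit (a : X) : M →ₗ[k] A a a :=
  LinearMap.toSpanSingleton k (A a a) (one a) ∘ₗ εM

lemma conv_apply {a b c : X} (f : M →ₗ[k] A a b) (g : M →ₗ[k] A b c) (w : M) :
    conv mul ΔM f g w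
      = TensorProduct.lift (mul a b c) (TensorProduct.map f g (ΔM w)) := rfl

lemma eunit_apply (a : X) (w : M) : eunit one εM a w = εM w • one a := rfl

lemma conv_assoc
    (hassoc : ∀ x y z w (a : A x y) (b : A y z) (c : A z w),
      mul x z w (mul x y z a b) c = mul x y w a (mul y z w b c))
    (hco : ∀ m : M,
      (TensorProduct.assoc k M M M) ((TensorProduct.map ΔM LinearMap.id) (ΔM m))
        = (TensorProduct.map LinearMap.id ΔM) (ΔM m))
    {a b c d : X} (f : M →ₗ[k] A a b) (g : M →ₗ[k] A b c) (h : M →ₗ[k] A c d) :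
    conv mul ΔM (conv mul ΔM f g) h = conv mul ΔM f (conv mul ΔM g h) := by
  set R : (M ⊗[k] M) ⊗[k] M →ₗ[k] A a d :=
    TensorProduct.lift (mul a c d) ∘ₗ
      TensorProduct.map (TensorProduct.lift (mul a b c) ∘ₗ TensorProduct.map f g) h with hR
  set L : M ⊗[k] (M ⊗[k] M) →ₗ[k] A a d :=
    TensorProduct.lift (mul a b d) ∘ₗ
      TensorProduct.map f (TensorProduct.lift (mul b c d) ∘ₗ TensorProduct.map g h) with hL
  have step1 : TensorProduct.map (conv mul ΔM f g) h
      = (TensorProduct.map (TensorProduct.lift (mul a b c) ∘ₗ TensorProduct.map f g) h)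
          ∘ₗ TensorProduct.map ΔM LinearMap.id := by
    apply TensorProduct.ext'; intro u v; simp [conv]
  have step2 : TensorProduct.map f (conv mul ΔM g h)
      = (TensorProduct.map f (TensorProduct.lift (mul b c d) ∘ₗ TensorProduct.map g h))
          ∘ₗ TensorProduct.map LinearMap.id ΔM := by
    apply TensorProduct.ext'; intro u v; simp [conv]
  have step3 : R = L ∘ₗ (TensorProduct.assoc k M M M).toLinearMap := by
    apply TensorProduct.ext_threefold; intro p q r
    simp [hR, hL, hassoc]
  apply LinearMap.ext; intro w
  have e1 : conv mul ΔM (conv mul ΔM f g) h w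
      = R ((TensorProduct.map ΔM LinearMap.id) (ΔM w)) := by
    rw [conv_apply, step1]; rfl
  have e2 : conv mul ΔM f (conv mul ΔM g h) w
      = L ((TensorProduct.map LinearMap.id ΔM) (ΔM w)) := by
    rw [conv_apply, step2]; rfl
  rw [e1, e2, step3, ← hco w]; rfl

lemma eunit_conv
    (hone : ∀ x y (u : A x y), mul x x y (one x) u = u)
    (hcl : ∀ m : M,
      (TensorProduct.lid k M) ((TensorProduct.map εM LinearMap.id) (ΔM m)) = m)
    {a b : X} (f : M →ₗ[k] A a b) :
    conv mul ΔM (eunit one εM a) f = f := by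
  have step : TensorProduct.lift (mul a a b) ∘ₗ TensorProduct.map (eunit one εM a) f
      = f ∘ₗ (TensorProduct.lid k M).toLinearMap ∘ₗ TensorProduct.map εM LinearMap.id := by
    apply TensorProduct.ext'; intro u v
    simp [eunit, hone]
  apply LinearMap.ext; intro w
  have h1 := LinearMap.congr_fun step (ΔM w)
  simp only [LinearMap.comp_apply, LinearEquiv.coe_coe] at h1
  rw [conv_apply, h1, hcl]

lemma conv_eunit
    (hone : ∀ x y (u : A x y), mul x y y u (one y) = u)
    (hcr : ∀ m : M,
      (TensorProduct.rid k M) ((TensorProduct.map LinearMap.id εM) (ΔM m)) = m)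
    {a b : X} (f : M →ₗ[k] A a b) :
    conv mul ΔM f (eunit one εM b) = f := by
  have step : TensorProduct.lift (mul a b b) ∘ₗ TensorProduct.map f (eunit one εM b)
      = f ∘ₗ (TensorProduct.rid k M).toLinearMap ∘ₗ TensorProduct.map LinearMap.id εM := by
    apply TensorProduct.ext'; intro u v
    simp [eunit, hone]
  apply LinearMap.ext; intro w
  have h1 := LinearMap.congr_fun step (ΔM w)
  simp only [LinearMap.comp_apply, LinearEquiv.coe_coe] at h1
  rw [conv_apply, h1, hcr]

end Conv

section TensorCoalgebra
variable {k : Type*} [CommRing k] {P Q : Type*}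
  [AddCommGroup P] [Module k P] [AddCommGroup Q] [Module k Q]
  (ΔP : P →ₗ[k] P ⊗[k] P) (ΔQ : Q →ₗ[k] Q ⊗[k] Q)
  (εP : P →ₗ[k] k) (εQ : Q →ₗ[k] k)

noncomputable def ΔT : P ⊗[k] Q →ₗ[k] (P ⊗[k] Q) ⊗[k] (P ⊗[k] Q) :=
  (TensorProduct.tensorTensorTensorComm k P P Q Q).toLinearMap ∘ₗ TensorProduct.map ΔP ΔQ

noncomputable def εT : P ⊗[k] Q →ₗ[k] k :=
  (LinearMap.mul' k k) ∘ₗ TensorProduct.map εP εQ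

lemma ΔT_tmul (p : P) (q : Q) :
    ΔT ΔP ΔQ (p ⊗ₜ[k] q)
      = (TensorProduct.tensorTensorTensorComm k P P Q Q) (ΔP p ⊗ₜ[k] ΔQ q) := rfl

lemma εT_tmul (p : P) (q : Q) : εT εP εQ (p ⊗ₜ[k] q) = εP p * εQ q := by
  simp [εT]

lemma counitl_T
    (hP : ∀ p, (TensorProduct.lid k P) ((TensorProduct.map εP LinearMap.id) (ΔP p)) = p)
    (hQ : ∀ q, (TensorProduct.lid k Q) ((TensorProduct.map εQ LinearMap.id) (ΔQ q)) = q) :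
    ∀ m : P ⊗[k] Q,
      (TensorProduct.lid k (P ⊗[k] Q))
        ((TensorProduct.map (εT εP εQ) LinearMap.id) (ΔT ΔP ΔQ m)) = m := by
  have key : (TensorProduct.lid k (P ⊗[k] Q)).toLinearMap
        ∘ₗ TensorProduct.map (εT εP εQ) LinearMap.id
        ∘ₗ (TensorProduct.tensorTensorTensorComm k P P Q Q).toLinearMap
      = TensorProduct.map
          ((TensorProduct.lid k P).toLinearMap ∘ₗ TensorProduct.map εP LinearMap.id)
          ((TensorProduct.lid k Q).toLinearMap ∘ₗ TensorProduct.map εQ LinearMap.id) := by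
    apply TensorProduct.ext_fourfold'; intro a b c d
    simp [εT, smul_tmul', tmul_smul, smul_smul, mul_comm]
  intro m
  induction m using TensorProduct.induction_on with
  | zero => simp
  | add u v hu hv => simp only [map_add, hu, hv]
  | tmul p q =>
    have h1 := LinearMap.congr_fun key (ΔP p ⊗ₜ[k] ΔQ q)
    simp only [LinearMap.comp_apply, LinearEquiv.coe_coe, TensorProduct.map_tmul] at h1
    rw [ΔT_tmul, h1, hP, hQ]

lemma counitr_T
    (hP : ∀ p, (TensorProduct.rid k P) ((TensorProduct.map LinearMap.id εP) (ΔP p)) = p)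
    (hQ : ∀ q, (TensorProduct.rid k Q) ((TensorProduct.map LinearMap.id εQ) (ΔQ q)) = q) :
    ∀ m : P ⊗[k] Q,
      (TensorProduct.rid k (P ⊗[k] Q))
        ((TensorProduct.map LinearMap.id (εT εP εQ)) (ΔT ΔP ΔQ m)) = m := by
  have key : (TensorProduct.rid k (P ⊗[k] Q)).toLinearMap
        ∘ₗ TensorProduct.map LinearMap.id (εT εP εQ)
        ∘ₗ (TensorProduct.tensorTensorTensorComm k P P Q Q).toLinearMap
      = TensorProduct.map
          ((TensorProduct.rid k P).toLinearMap ∘ₗ TensorProduct.map LinearMap.id εP)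
          ((TensorProduct.rid k Q).toLinearMap ∘ₗ TensorProduct.map LinearMap.id εQ) := by
    apply TensorProduct.ext_fourfold'; intro a b c d
    simp [εT, smul_tmul', tmul_smul, smul_smul, mul_comm]
  intro m
  induction m using TensorProduct.induction_on with
  | zero => simp
  | add u v hu hv => simp only [map_add, hu, hv]
  | tmul p q =>
    have h1 := LinearMap.congr_fun key (ΔP p ⊗ₜ[k] ΔQ q)
    simp only [LinearMap.comp_apply, LinearEquiv.coe_coe, TensorProduct.map_tmul] at h1
    rw [ΔT_tmul, h1, hP, hQ]

lemma coassoc_T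
    (hP : ∀ p, (TensorProduct.assoc k P P P)
        ((TensorProduct.map ΔP LinearMap.id) (ΔP p))
      = (TensorProduct.map LinearMap.id ΔP) (ΔP p))
    (hQ : ∀ q, (TensorProduct.assoc k Q Q Q)
        ((TensorProduct.map ΔQ LinearMap.id) (ΔQ q))
      = (TensorProduct.map LinearMap.id ΔQ) (ΔQ q)) :
    ∀ m : P ⊗[k] Q,
      (TensorProduct.assoc k (P ⊗[k] Q) (P ⊗[k] Q) (P ⊗[k] Q))
        ((TensorProduct.map (ΔT ΔP ΔQ) LinearMap.id) (ΔT ΔP ΔQ m))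
      = (TensorProduct.map LinearMap.id (ΔT ΔP ΔQ)) (ΔT ΔP ΔQ m) := by
  -- abbreviations
  have lemB : TensorProduct.map (ΔT ΔP ΔQ) LinearMap.id
        ∘ₗ (TensorProduct.tensorTensorTensorComm k P P Q Q).toLinearMap
      = (TensorProduct.map (TensorProduct.tensorTensorTensorComm k P P Q Q).toLinearMap
            LinearMap.id)
        ∘ₗ (TensorProduct.tensorTensorTensorComm k (P ⊗[k] P) P (Q ⊗[k] Q) Q).toLinearMap
        ∘ₗ TensorProduct.map (TensorProduct.map ΔP LinearMap.id)
            (TensorProduct.map ΔQ LinearMap.id) := by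
    apply TensorProduct.ext_fourfold'; intro a b c d
    simp [ΔT]
  have lemC : TensorProduct.map LinearMap.id (ΔT ΔP ΔQ)
        ∘ₗ (TensorProduct.tensorTensorTensorComm k P P Q Q).toLinearMap
      = (TensorProduct.map LinearMap.id
            (TensorProduct.tensorTensorTensorComm k P P Q Q).toLinearMap)
        ∘ₗ (TensorProduct.tensorTensorTensorComm k P (P ⊗[k] P) Q (Q ⊗[k] Q)).toLinearMap
        ∘ₗ TensorProduct.map (TensorProduct.map LinearMap.id ΔP)
            (TensorProduct.map LinearMap.id ΔQ) := by
    apply TensorProduct.ext_fourfold'; intro a b c d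
    simp [ΔT]
  have lemA : (TensorProduct.assoc k (P ⊗[k] Q) (P ⊗[k] Q) (P ⊗[k] Q)).toLinearMap
        ∘ₗ (TensorProduct.map (TensorProduct.tensorTensorTensorComm k P P Q Q).toLinearMap
              LinearMap.id)
        ∘ₗ (TensorProduct.tensorTensorTensorComm k (P ⊗[k] P) P (Q ⊗[k] Q) Q).toLinearMap
      = (TensorProduct.map LinearMap.id
            (TensorProduct.tensorTensorTensorComm k P P Q Q).toLinearMap)
        ∘ₗ (TensorProduct.tensorTensorTensorComm k P (P ⊗[k] P) Q (Q ⊗[k] Q)).toLinearMap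
        ∘ₗ TensorProduct.map (TensorProduct.assoc k P P P).toLinearMap
            (TensorProduct.assoc k Q Q Q).toLinearMap := by
    apply TensorProduct.ext_fourfold'; intro w x y z
    induction w using TensorProduct.induction_on with
    | zero => simp
    | add u v hu hv => simp only [add_tmul, map_add, hu, hv]
    | tmul a b =>
      induction y using TensorProduct.induction_on with
      | zero => simp
      | add u v hu hv => simp only [add_tmul, tmul_add, map_add, hu, hv]
      | tmul d e => simp
  intro m
  induction m using TensorProduct.induction_on with
  | zero => simp
  | add u v hu hv => simp only [map_add, hu, hv]
  | tmul p q =>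
    have hB := LinearMap.congr_fun lemB (ΔP p ⊗ₜ[k] ΔQ q)
    have hC := LinearMap.congr_fun lemC (ΔP p ⊗ₜ[k] ΔQ q)
    have hA := LinearMap.congr_fun lemA
      ((TensorProduct.map ΔP LinearMap.id) (ΔP p)
        ⊗ₜ[k] (TensorProduct.map ΔQ LinearMap.id) (ΔQ q))
    simp only [LinearMap.comp_apply, LinearEquiv.coe_coe, TensorProduct.map_tmul] at hB hC hA
    rw [ΔT_tmul, hB, hA, hP, hQ, hC]

end TensorCoalgebra

section Sandwich
variable {k : Type*} [CommRing k] {U U' V C D E : Type*}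
  [AddCommGroup U] [Module k U] [AddCommGroup U'] [Module k U']
  [AddCommGroup V] [Module k V] [AddCommGroup C] [Module k C]
  [AddCommGroup D] [Module k D] [AddCommGroup E] [Module k E]

noncomputable def sandwich (μ₁ : U →ₗ[k] V →ₗ[k] C) (μ₂ : C →ₗ[k] D →ₗ[k] E)
    (s : U' →ₗ[k] D) : (U ⊗[k] U') ⊗[k] V →ₗ[k] E :=
  TensorProduct.lift μ₂
    ∘ₗ TensorProduct.map (TensorProduct.lift μ₁) s
    ∘ₗ (TensorProduct.assoc k U V U').symm.toLinearMap
    ∘ₗ TensorProduct.map LinearMap.id (TensorProduct.comm k U' V).toLinearMap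
    ∘ₗ (TensorProduct.assoc k U U' V).toLinearMap

lemma sandwich_tmul (μ₁ : U →ₗ[k] V →ₗ[k] C) (μ₂ : C →ₗ[k] D →ₗ[k] E)
    (s : U' →ₗ[k] D) (a : U) (a' : U') (b : V) :
    sandwich μ₁ μ₂ s ((a ⊗ₜ[k] a') ⊗ₜ[k] b) = μ₂ (μ₁ a b) (s a') := by
  simp [sandwich]

end Sandwich
theorem hopf_category_antipode_antimultiplicative
    {k : Type*} [CommRing k] {X : Type*}
    (A : X → X → Type*)
    [∀ x y, AddCommGroup (A x y)] [∀ x y, Module k (A x y)]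
    (Δ : ∀ x y, A x y →ₗ[k] A x y ⊗[k] A x y)
    (ε : ∀ x y, A x y →ₗ[k] k)
    (mul : ∀ x y z, A x y →ₗ[k] A y z →ₗ[k] A x z)
    (one : ∀ x, A x x)
    (coassoc : ∀ x y (a : A x y),
      (TensorProduct.assoc k (A x y) (A x y) (A x y))
          ((TensorProduct.map (Δ x y) LinearMap.id) (Δ x y a))
        = (TensorProduct.map LinearMap.id (Δ x y)) (Δ x y a))
    (counit_left : ∀ x y (a : A x y),
      (TensorProduct.lid k (A x y)) ((TensorProduct.map (ε x y) LinearMap.id) (Δ x y a)) = a)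
    (counit_right : ∀ x y (a : A x y),
      (TensorProduct.rid k (A x y)) ((TensorProduct.map LinearMap.id (ε x y)) (Δ x y a)) = a)
    (mul_assoc' : ∀ x y z w (a : A x y) (b : A y z) (c : A z w),
      mul x z w (mul x y z a b) c = mul x y w a (mul y z w b c))
    (one_mul' : ∀ x y (a : A x y), mul x x y (one x) a = a)
    (mul_one' : ∀ x y (a : A x y), mul x y y a (one y) = a)
    (Δ_mul : ∀ x y z (a : A x y) (b : A y z),
      Δ x z (mul x y z a b)
        = (TensorProduct.map (TensorProduct.lift (mul x y z)) (TensorProduct.lift (mul x y z)))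
            ((TensorProduct.tensorTensorTensorComm k (A x y) (A x y) (A y z) (A y z))
              ((Δ x y a) ⊗ₜ[k] (Δ y z b))))
    (ε_mul : ∀ x y z (a : A x y) (b : A y z),
      ε x z (mul x y z a b) = ε x y a * ε y z b)
    (Δ_one : ∀ x, Δ x x (one x) = (one x) ⊗ₜ[k] (one x))
    (ε_one : ∀ x, ε x x (one x) = 1)
    (S : ∀ x y, A x y →ₗ[k] A y x)
    (S_left : ∀ x y (h : A x y),
      (TensorProduct.lift (mul x y x)) ((TensorProduct.map LinearMap.id (S x y)) (Δ x y h))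
        = ε x y h • one x)
    (S_right : ∀ x y (h : A x y),
      (TensorProduct.lift (mul y x y)) ((TensorProduct.map (S x y) LinearMap.id) (Δ x y h))
        = ε x y h • one y)
 :
    (∀ x y z (h : A x y) (l : A y z),
        S x z (mul x y z h l) = mul z y x (S y z l) (S x y h))
    ∧ (∀ x, S x x (one x) = one x) := by
  constructor
  · intro x y z h l
    -- notation
    set ΔM : A x y ⊗[k] A y z →ₗ[k] (A x y ⊗[k] A y z) ⊗[k] (A x y ⊗[k] A y z) :=
      ΔT (Δ x y) (Δ y z) with hΔM
    set εM : A x y ⊗[k] A y z →ₗ[k] k := εT (ε x y) (ε y z) with hεM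
    set m' : A x y ⊗[k] A y z →ₗ[k] A x z := TensorProduct.lift (mul x y z) with hm'
    set F : A x y ⊗[k] A y z →ₗ[k] A z x := S x z ∘ₗ m' with hF
    set G : A x y ⊗[k] A y z →ₗ[k] A z x :=
      TensorProduct.lift ((((mul z y x) ∘ₗ (S y z)).flip) ∘ₗ (S x y)) with hGdef
    have hG : ∀ (h' : A x y) (l' : A y z),
        G (h' ⊗ₜ[k] l') = mul z y x (S y z l') (S x y h') := by
      intro h' l'; simp [hGdef]
    have hco := coassoc_T (Δ x y) (Δ y z) (coassoc x y) (coassoc y z)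
    have hcl := counitl_T (Δ x y) (Δ y z) (ε x y) (ε y z) (counit_left x y) (counit_left y z)
    have hcr := counitr_T (Δ x y) (Δ y z) (ε x y) (ε y z) (counit_right x y) (counit_right y z)
    -- multiplication is a coalgebra map, packaged
    have hΔm : ∀ w : A x y ⊗[k] A y z,
        Δ x z (m' w) = TensorProduct.map m' m' (ΔM w) := by
      have : Δ x z ∘ₗ m' = TensorProduct.map m' m' ∘ₗ ΔM := by
        apply TensorProduct.ext'; intro u v
        simp only [LinearMap.comp_apply, hm', TensorProduct.lift.tmul, hΔM, ΔT_tmul]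
        exact Δ_mul x y z u v
      intro w; exact LinearMap.congr_fun this w
    have hεm : ∀ w : A x y ⊗[k] A y z, ε x z (m' w) = εM w := by
      have : ε x z ∘ₗ m' = εM := by
        apply TensorProduct.ext'; intro u v
        simp only [LinearMap.comp_apply, hm', TensorProduct.lift.tmul, hεM, εT_tmul]
        exact ε_mul x y z u v
      intro w; exact LinearMap.congr_fun this w
    -- step 1 : F is a left convolution inverse of m'
    have step1 : conv mul ΔM F m' = eunit one εM z := by
      apply LinearMap.ext; intro w
      have hmaps : TensorProduct.map F m'
          = TensorProduct.map (S x z) LinearMap.id ∘ₗ TensorProduct.map m' m' := by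
        rw [← TensorProduct.map_comp, LinearMap.id_comp]
      rw [conv_apply, hmaps, LinearMap.comp_apply, ← hΔm w, S_right x z (m' w), hεm w]
      rfl
    -- step 2 : G is a right convolution inverse of m'
    have step2 : conv mul ΔM m' G = eunit one εM x := by
      set Θ : ((A x y ⊗[k] A x y) ⊗[k] A y y) →ₗ[k] A x x :=
        sandwich (mul x y y) (mul x y x) (S x y) with hΘ
      have lemE : TensorProduct.lift (mul x z x) ∘ₗ TensorProduct.map m' G
            ∘ₗ (TensorProduct.tensorTensorTensorComm k (A x y) (A x y) (A y z) (A y z)).toLinearMap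
          = Θ ∘ₗ TensorProduct.map LinearMap.id
              (TensorProduct.lift (mul y z y) ∘ₗ TensorProduct.map LinearMap.id (S y z)) := by
        apply TensorProduct.ext_fourfold'; intro h1 h2 l1 l2
        simp only [LinearMap.comp_apply, LinearEquiv.coe_coe,
          TensorProduct.tensorTensorTensorComm_tmul, TensorProduct.map_tmul,
          TensorProduct.lift.tmul, LinearMap.id_coe, id_eq, hG, hm', hΘ, sandwich_tmul]
        rw [← mul_assoc' x z y x, mul_assoc' x y z y]
      have lemF : ∀ u : A x y ⊗[k] A x y,
          Θ (u ⊗ₜ[k] one y)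
            = TensorProduct.lift (mul x y x)
                ((TensorProduct.map LinearMap.id (S x y)) u) := by
        intro u
        induction u using TensorProduct.induction_on with
        | zero => simp
        | add u v hu hv => simp only [add_tmul, map_add, hu, hv]
        | tmul a b => simp [hΘ, sandwich_tmul, mul_one']
      apply LinearMap.ext; intro w
      induction w using TensorProduct.induction_on with
      | zero => simp
      | add u v hu hv => simp only [map_add, hu, hv]
      | tmul h' l' =>
        have hE := LinearMap.congr_fun lemE (Δ x y h' ⊗ₜ[k] Δ y z l')
        simp only [LinearMap.comp_apply, LinearEquiv.coe_coe, TensorProduct.map_tmul,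
          LinearMap.id_coe, id_eq] at hE
        rw [conv_apply, hΔM, ΔT_tmul, hE, S_left y z l', tmul_smul, map_smul,
          lemF, S_left x y h', eunit_apply, hεM, εT_tmul, smul_smul, mul_comm]
    -- convolution algebra argument
    have chain : F = G := by
      calc F = conv mul ΔM F (eunit one εM x) := (conv_eunit mul one ΔM εM mul_one' hcr F).symm
        _ = conv mul ΔM F (conv mul ΔM m' G) := by rw [step2]
        _ = conv mul ΔM (conv mul ΔM F m') G := (conv_assoc mul ΔM mul_assoc' hco F m' G).symm
        _ = conv mul ΔM (eunit one εM z) G := by rw [step1]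
        _ = G := eunit_conv mul one ΔM εM one_mul' hcl G
    have := LinearMap.congr_fun chain (h ⊗ₜ[k] l)
    simpa [hF, hm', hG] using this
  · intro x
    have h1 := S_left x x (one x)
    rw [Δ_one x, ε_one x] at h1
    simpa [one_mul'] using h1
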